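/- Fix reals a < b and μ ∈ ℝ and define G(Σ) = ∫_a^b N(ξ|μ,Σ) dξ for Σ > 0. (i) If a < μ < b, then G is strictly decreasing on (0,∞). (ii) If μ ∉ [a,b], let Σ^c(μ) = ((μ−a)² − (μ−b)²) / ( 2 log((μ−a)/(μ−b)) ), which is a well-defined positive real; then G is strictly increasing on (0, Σ^c(μ)) and strictly decreasing on (Σ^c(μ), ∞). -/

import Mathlib

/-!
Standardising, `G(v) = Φ((b - μ)/√v) - Φ((a - μ)/√v)` with `Φ` a primitive of `N(·|0,1)`, so
`G'(v) = ((μ - b) N(b|μ,v) - (μ - a) N(a|μ,v)) / (2v)`. For `a < μ < b` both terms are negative.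
For `b < μ` put `p = μ - a > q = μ - b > 0`; then `G'(v)` has the sign of
`q exp(-q²/2v) - p exp(-p²/2v)`, and `p exp(-p²/2v) = q exp(-q²/2v) · exp(log(p/q) (1 - Σᶜ/v))`
with `Σᶜ = critVar p q`, so `G' > 0` exactly on `v < Σᶜ`. The case `μ < a` is the mirror image
under `ξ ↦ -ξ`.
-/

open MeasureTheory Real Set

/-- One-dimensional Gaussian density `N(ξ|μ,v) = (2πv)^{-1/2} exp(−(ξ−μ)²/(2v))`. -/
noncomputable def gaussPDF (μ v ξ : ℝ) : ℝ :=
  (Real.sqrt (2 * Real.pi * v))⁻¹ * Real.exp (-((ξ - μ) ^ 2) / (2 * v))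

lemma continuous_gaussPDF (μ v : ℝ) : Continuous (gaussPDF μ v) := by
  unfold gaussPDF; fun_prop

lemma gaussPDF_pos (μ : ℝ) {v : ℝ} (hv : 0 < v) (ξ : ℝ) : 0 < gaussPDF μ v ξ := by
  unfold gaussPDF; positivity

lemma gaussPDF_neg_neg (μ v ξ : ℝ) : gaussPDF (-μ) v (-ξ) = gaussPDF μ v ξ := by
  unfold gaussPDF; ring_nf

lemma gaussPDF_eq_inv_sqrt_mul (μ : ℝ) {v : ℝ} (hv : 0 < v) (ξ : ℝ) :
    gaussPDF μ v ξ = (√v)⁻¹ * gaussPDF 0 1 ((ξ - μ) / √v) := by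
  unfold gaussPDF
  rw [sub_zero, mul_one, sqrt_mul (by positivity), div_pow, sq_sqrt hv.le, mul_inv]
  ring_nf

lemma mul_gaussPDF (μ v x : ℝ) :
    (μ - x) * gaussPDF μ v x =
      (√(2 * π * v))⁻¹ * ((μ - x) * exp (-(μ - x) ^ 2 / (2 * v))) := by
  unfold gaussPDF; ring_nf

noncomputable def stdGaussPrimitive (x : ℝ) : ℝ := ∫ t in (0 : ℝ)..x, gaussPDF 0 1 t

lemma hasDerivAt_stdGaussPrimitive (x : ℝ) : HasDerivAt stdGaussPrimitive (gaussPDF 0 1 x) x :=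
  intervalIntegral.integral_hasDerivAt_right ((continuous_gaussPDF 0 1).intervalIntegrable _ _)
    ((continuous_gaussPDF 0 1).stronglyMeasurableAtFilter _ _)
    (continuous_gaussPDF 0 1).continuousAt

lemma hasDerivAt_stdGaussPrimitive_standardize (μ : ℝ) {v : ℝ} (hv : 0 < v) (ξ : ℝ) :
    HasDerivAt (fun ξ => stdGaussPrimitive ((ξ - μ) / √v)) (gaussPDF μ v ξ) ξ := by
  refine ((hasDerivAt_stdGaussPrimitive _).comp ξ
    (((hasDerivAt_id ξ).sub_const μ).div_const √v)).congr_deriv ?_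
  rw [gaussPDF_eq_inv_sqrt_mul μ hv, id, one_div, mul_comm]

lemma hasDerivAt_div_sqrt (c : ℝ) {v : ℝ} (hv : 0 < v) :
    HasDerivAt (fun v => c / √v) (-(c / √v) / (2 * v)) v := by
  have hs : √v ≠ 0 := (sqrt_pos.2 hv).ne'
  refine ((hasDerivAt_const v c).div (hasDerivAt_sqrt hv.ne') hs).congr_deriv ?_
  field_simp
  rw [sq_sqrt hv.le]
  ring

lemma hasDerivAt_stdGaussPrimitive_standardize_variance (μ ξ : ℝ) {v : ℝ} (hv : 0 < v) :
    HasDerivAt (fun v => stdGaussPrimitive ((ξ - μ) / √v))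
      ((μ - ξ) * gaussPDF μ v ξ / (2 * v)) v := by
  refine ((hasDerivAt_stdGaussPrimitive _).comp v (hasDerivAt_div_sqrt (ξ - μ) hv)).congr_deriv ?_
  rw [gaussPDF_eq_inv_sqrt_mul μ hv]
  ring

noncomputable def gaussBoxProb (a b μ v : ℝ) : ℝ := ∫ ξ in Icc a b, gaussPDF μ v ξ

lemma gaussBoxProb_eq_intervalIntegral {a b : ℝ} (hab : a ≤ b) (μ v : ℝ) :
    gaussBoxProb a b μ v = ∫ ξ in a..b, gaussPDF μ v ξ := by
  rw [gaussBoxProb, integral_Icc_eq_integral_Ioc, intervalIntegral.integral_of_le hab]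

lemma gaussBoxProb_neg {a b : ℝ} (hab : a ≤ b) (μ : ℝ) :
    gaussBoxProb (-b) (-a) (-μ) = gaussBoxProb a b μ := by
  ext v
  rw [gaussBoxProb_eq_intervalIntegral (neg_le_neg hab), gaussBoxProb_eq_intervalIntegral hab,
    ← intervalIntegral.integral_comp_neg]
  simp only [gaussPDF_neg_neg]

lemma gaussBoxProb_eq_sub {a b : ℝ} (hab : a ≤ b) (μ : ℝ) {v : ℝ} (hv : 0 < v) :
    gaussBoxProb a b μ v =
      stdGaussPrimitive ((b - μ) / √v) - stdGaussPrimitive ((a - μ) / √v) := by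
  rw [gaussBoxProb_eq_intervalIntegral hab]
  exact intervalIntegral.integral_eq_sub_of_hasDerivAt
    (fun ξ _ => hasDerivAt_stdGaussPrimitive_standardize μ hv ξ)
    ((continuous_gaussPDF μ v).intervalIntegrable _ _)

noncomputable def gaussBoxDeriv (a b μ v : ℝ) : ℝ :=
  ((μ - b) * gaussPDF μ v b - (μ - a) * gaussPDF μ v a) / (2 * v)

lemma hasDerivAt_gaussBoxProb {a b : ℝ} (hab : a ≤ b) (μ : ℝ) {v : ℝ} (hv : 0 < v) :
    HasDerivAt (gaussBoxProb a b μ) (gaussBoxDeriv a b μ v) v := by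
  have h := (hasDerivAt_stdGaussPrimitive_standardize_variance μ b hv).sub
    (hasDerivAt_stdGaussPrimitive_standardize_variance μ a hv)
  rw [← sub_div] at h
  refine h.congr_of_eventuallyEq ?_
  filter_upwards [Ioi_mem_nhds hv] with w hw using gaussBoxProb_eq_sub hab μ hw

lemma strictMonoOn_gaussBoxProb {a b : ℝ} (hab : a ≤ b) (μ : ℝ) {D : Set ℝ} (hD : Convex ℝ D)
    (hD₀ : D ⊆ Ioi 0) (hpos : ∀ v ∈ interior D, 0 < gaussBoxDeriv a b μ v) :
    StrictMonoOn (gaussBoxProb a b μ) D :=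
  strictMonoOn_of_hasDerivWithinAt_pos hD
    (fun _ hv => (hasDerivAt_gaussBoxProb hab μ (hD₀ hv)).continuousAt.continuousWithinAt)
    (fun _ hv => (hasDerivAt_gaussBoxProb hab μ (hD₀ (interior_subset hv))).hasDerivWithinAt)
    hpos

lemma strictAntiOn_gaussBoxProb {a b : ℝ} (hab : a ≤ b) (μ : ℝ) {D : Set ℝ} (hD : Convex ℝ D)
    (hD₀ : D ⊆ Ioi 0) (hneg : ∀ v ∈ interior D, gaussBoxDeriv a b μ v < 0) :
    StrictAntiOn (gaussBoxProb a b μ) D :=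
  strictAntiOn_of_hasDerivWithinAt_neg hD
    (fun _ hv => (hasDerivAt_gaussBoxProb hab μ (hD₀ hv)).continuousAt.continuousWithinAt)
    (fun _ hv => (hasDerivAt_gaussBoxProb hab μ (hD₀ (interior_subset hv))).hasDerivWithinAt)
    hneg

noncomputable def critVar (p q : ℝ) : ℝ := (p ^ 2 - q ^ 2) / (2 * log (p / q))

lemma critVar_neg_neg (p q : ℝ) : critVar (-q) (-p) = critVar p q := by
  rw [critVar, critVar, neg_div_neg_eq, ← inv_div p q, log_inv]
  ring

lemma critVar_pos {p q : ℝ} (hq : 0 < q) (hqp : q < p) : 0 < critVar p q :=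
  div_pos (by nlinarith) (mul_pos two_pos (log_pos ((one_lt_div hq).2 hqp)))

lemma log_div_sub_eq_mul_critVar {p q : ℝ} (hq : 0 < q) (hp : 0 < p) (hpq : p ≠ q) {v : ℝ}
    (hv : v ≠ 0) :
    log (p / q) - (p ^ 2 - q ^ 2) / (2 * v) = log (p / q) * (1 - critVar p q / v) := by
  have hL : log (p / q) ≠ 0 :=
    log_ne_zero_of_pos_of_ne_one (div_pos hp hq) ((div_eq_one_iff_eq hq.ne').not.2 hpq)
  rw [critVar]
  field_simp

lemma mul_exp_mul_exp_log_div {x y : ℝ} (hx : 0 < x) (hy : 0 < y) (v : ℝ) :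
    x * exp (-x ^ 2 / (2 * v)) * exp (log (y / x) - (y ^ 2 - x ^ 2) / (2 * v)) =
      y * exp (-y ^ 2 / (2 * v)) := by
  rw [exp_sub, exp_log (div_pos hy hx)]
  field_simp
  rw [← exp_add]
  ring_nf

lemma mul_exp_lt_mul_exp_iff {p q : ℝ} (hq : 0 < q) (hqp : q < p) {v : ℝ} (hv : 0 < v) :
    p * exp (-p ^ 2 / (2 * v)) < q * exp (-q ^ 2 / (2 * v)) ↔ v < critVar p q := by
  have hp := hq.trans hqp
  rw [← mul_exp_mul_exp_log_div hq hp v, mul_lt_iff_lt_one_right (by positivity), exp_lt_one_iff,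
    log_div_sub_eq_mul_critVar hq hp hqp.ne' hv.ne', ← neg_pos, ← mul_neg,
    mul_pos_iff_of_pos_left (log_pos ((one_lt_div hq).2 hqp)), neg_pos, sub_neg, one_lt_div hv]

lemma mul_exp_lt_mul_exp_iff' {p q : ℝ} (hq : 0 < q) (hqp : q < p) {v : ℝ} (hv : 0 < v) :
    q * exp (-q ^ 2 / (2 * v)) < p * exp (-p ^ 2 / (2 * v)) ↔ critVar p q < v := by
  have hp := hq.trans hqp
  rw [← mul_exp_mul_exp_log_div hq hp v, lt_mul_iff_one_lt_right (by positivity), one_lt_exp_iff,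
    log_div_sub_eq_mul_critVar hq hp hqp.ne' hv.ne',
    mul_pos_iff_of_pos_left (log_pos ((one_lt_div hq).2 hqp)), sub_pos, div_lt_one hv]

lemma gaussBoxDeriv_eq (a b μ v : ℝ) :
    gaussBoxDeriv a b μ v = (√(2 * π * v))⁻¹ / (2 * v) *
      ((μ - b) * exp (-(μ - b) ^ 2 / (2 * v)) - (μ - a) * exp (-(μ - a) ^ 2 / (2 * v))) := by
  rw [gaussBoxDeriv, mul_gaussPDF, mul_gaussPDF]
  ring

lemma gaussBoxDeriv_neg_of_mem_Ioo {a b μ : ℝ} (hμ : μ ∈ Ioo a b) {v : ℝ} (hv : 0 < v) :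
    gaussBoxDeriv a b μ v < 0 :=
  div_neg_of_neg_of_pos
    (sub_neg.2 ((mul_neg_of_neg_of_pos (sub_neg.2 hμ.2) (gaussPDF_pos μ hv b)).trans
      (mul_pos (sub_pos.2 hμ.1) (gaussPDF_pos μ hv a))))
    (by positivity)

lemma gaussBoxDeriv_pos_iff {a b μ : ℝ} (hab : a < b) (hbμ : b < μ) {v : ℝ} (hv : 0 < v) :
    0 < gaussBoxDeriv a b μ v ↔ v < critVar (μ - a) (μ - b) := by
  rw [gaussBoxDeriv_eq, mul_pos_iff_of_pos_left (by positivity), sub_pos]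
  exact mul_exp_lt_mul_exp_iff (sub_pos.2 hbμ) (by linarith) hv

lemma gaussBoxDeriv_neg_iff {a b μ : ℝ} (hab : a < b) (hbμ : b < μ) {v : ℝ} (hv : 0 < v) :
    gaussBoxDeriv a b μ v < 0 ↔ critVar (μ - a) (μ - b) < v := by
  rw [gaussBoxDeriv_eq, ← neg_pos, ← mul_neg, mul_pos_iff_of_pos_left (by positivity), neg_sub,
    sub_pos]
  exact mul_exp_lt_mul_exp_iff' (sub_pos.2 hbμ) (by linarith) hv

lemma gaussBoxProb_unimodal_of_lt {a b μ : ℝ} (hab : a < b) (hbμ : b < μ) :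
    0 < critVar (μ - a) (μ - b) ∧
      StrictMonoOn (gaussBoxProb a b μ) (Ioo 0 (critVar (μ - a) (μ - b))) ∧
      StrictAntiOn (gaussBoxProb a b μ) (Ioi (critVar (μ - a) (μ - b))) := by
  have hvc : 0 < critVar (μ - a) (μ - b) := critVar_pos (sub_pos.2 hbμ) (by linarith)
  refine ⟨hvc, strictMonoOn_gaussBoxProb hab.le μ (convex_Ioo _ _) Ioo_subset_Ioi_self ?_,
    strictAntiOn_gaussBoxProb hab.le μ (convex_Ioi _) (Ioi_subset_Ioi hvc.le) ?_⟩
  · rw [interior_Ioo]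
    exact fun v hv => (gaussBoxDeriv_pos_iff hab hbμ hv.1).2 hv.2
  · rw [interior_Ioi]
    exact fun v hv => (gaussBoxDeriv_neg_iff hab hbμ (hvc.trans hv)).2 hv

/-- The Gaussian box probability `G(v) = ∫_a^b N(ξ|μ,v) dξ` as a function of the variance:
(i) if `a < μ < b`, `G` is strictly decreasing on `(0,∞)`;
(ii) if `μ ∉ [a,b]`, with `vc = ((μ−a)² − (μ−b)²)/(2 log((μ−a)/(μ−b)))`, then `vc > 0`
and `G` is strictly increasing on `(0, vc)` and strictly decreasing on `(vc, ∞)`. -/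
theorem gaussian_box_probability_variance (a b μ : ℝ) (hab : a < b) :
    let G := fun v : ℝ => ∫ ξ in Set.Icc a b, gaussPDF μ v ξ
    ((a < μ ∧ μ < b) → StrictAntiOn G (Set.Ioi 0)) ∧
    (μ ∉ Set.Icc a b →
      let vc := ((μ - a) ^ 2 - (μ - b) ^ 2) / (2 * Real.log ((μ - a) / (μ - b)))
      0 < vc ∧ StrictMonoOn G (Set.Ioo 0 vc) ∧ StrictAntiOn G (Set.Ioi vc)) := by
  intro G
  refine ⟨fun hμ => strictAntiOn_gaussBoxProb hab.le μ (convex_Ioi 0) subset_rfl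
    fun v hv => gaussBoxDeriv_neg_of_mem_Ioo hμ (interior_subset hv), fun hμ => ?_⟩
  rcases not_and_or.1 hμ with hμa | hbμ
  · have hvc : critVar (μ - a) (μ - b) = critVar (-μ - -b) (-μ - -a) := by
      rw [← critVar_neg_neg]
      congr 1 <;> ring
    have h := gaussBoxProb_unimodal_of_lt (neg_lt_neg hab) (neg_lt_neg (not_le.1 hμa))
    rwa [gaussBoxProb_neg hab.le, ← hvc] at h
  · exact gaussBoxProb_unimodal_of_lt hab (not_le.1 hbμ)
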